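/- Let B_- = [[1,1,0,0],[1,1,1,0],[0,1,1,1],[0,0,1,1]] (a 4×4 integer matrix). Then there exists a group isomorphism φ : ℤ^5/(I−(B_-)_1)ℤ^5 → ℤ such that φ([(1,0,0,0,0)]) = 1 and φ([(1,1,1,1,1)]) = −1. -/

import Mathlib

open Matrix

noncomputable section

/-- `A` has entries in `{0,1}`. -/
def ZeroOneEntries {N : ℕ} (A : Matrix (Fin N) (Fin N) ℤ) : Prop :=
  ∀ i j, A i j = 0 ∨ A i j = 1

/-- `A` is irreducible: for all `i j` there is `m ≥ 1` with `(A^m) i j ≥ 1`. -/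
def IsIrreducibleMatrix {N : ℕ} (A : Matrix (Fin N) (Fin N) ℤ) : Prop :=
  ∀ i j, ∃ m : ℕ, 1 ≤ m ∧ 1 ≤ (A ^ m) i j

/-- `A` is a permutation matrix: every row and column has exactly one nonzero entry. -/
def IsPermutationMatrix {N : ℕ} (A : Matrix (Fin N) (Fin N) ℤ) : Prop :=
  (∀ i, ∃! j, A i j ≠ 0) ∧ (∀ j, ∃! i, A i j ≠ 0)

/-- The matrix `R₁` whose first row is `(1,…,1)` and whose other rows vanish. -/
def R1 (N : ℕ) [NeZero N] : Matrix (Fin N) (Fin N) ℤ :=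
  Matrix.of fun i _ => if i = 0 then 1 else 0

/-- `Â = A + R₁ - A·R₁`. -/
def Ahat {N : ℕ} [NeZero N] (A : Matrix (Fin N) (Fin N) ℤ) : Matrix (Fin N) (Fin N) ℤ :=
  A + R1 N - A * R1 N

/-- The subgroup `Mℤ^N = {Mx : x ∈ ℤ^N}` of `ℤ^N`. -/
abbrev colSpan {N : ℕ} (M : Matrix (Fin N) (Fin N) ℤ) : Submodule ℤ (Fin N → ℤ) :=
  LinearMap.range M.mulVecLin

/-- The quotient group `ℤ^N / Mℤ^N`. -/
abbrev MQuot {N : ℕ} (M : Matrix (Fin N) (Fin N) ℤ) := (Fin N → ℤ) ⧸ colSpan M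

/-- `s_A : ℤ^N → ℤ`, sum of coordinates. -/
def sA (N : ℕ) : (Fin N → ℤ) →ₗ[ℤ] ℤ := ∑ i : Fin N, LinearMap.proj i

lemma sA_apply {N : ℕ} (x : Fin N → ℤ) : sA N x = ∑ i, x i := by
  simp [sA]

/-- `e₁ = (1,0,…,0) ∈ ℤ^N`. -/
def e1 (N : ℕ) [NeZero N] : Fin N → ℤ := Pi.single 0 1

/-- `i₁ : ℤ → ℤ^N`, `m ↦ (m,0,…,0)`. -/
def i1 (N : ℕ) [NeZero N] : ℤ →ₗ[ℤ] (Fin N → ℤ) :=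
  LinearMap.toSpanSingleton ℤ _ (e1 N)

/-- `j_A : ℤ^N → ℤ^N`,
`(l₁,…,l_N) ↦ (-∑_{i=2}^N l_i, l₂, …, l_N)`. -/
def jA (N : ℕ) [NeZero N] : (Fin N → ℤ) →ₗ[ℤ] (Fin N → ℤ) where
  toFun l := fun i => if i = 0 then -∑ k ∈ Finset.univ.erase 0, l k else l i
  map_add' a b := by
    funext i
    by_cases h : i = 0
    · simp only [h, reduceIte, Pi.add_apply, Finset.sum_add_distrib]
      ring
    · simp [h]
  map_smul' c a := by
    funext i
    by_cases h : i = 0 <;>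
      simp [h, Finset.mul_sum, smul_eq_mul, mul_neg, mul_sub]

/-- The matrix `A₁` of size `N+1`, with first row `(1,…,1)`, first column `(1,0,…,0)ᵗ`,
and lower-right `N×N` block `A`. -/
def A1 {N : ℕ} (A : Matrix (Fin N) (Fin N) ℤ) : Matrix (Fin (N+1)) (Fin (N+1)) ℤ :=
  Matrix.of fun i j =>
    Fin.cases 1 (fun i' => Fin.cases 0 (fun j' => A i' j') j) i

/-- `ℤ^N → ℤ^{N+1}`, `x ↦ (0, x)`. -/
def ext0 {N : ℕ} : (Fin N → ℤ) →ₗ[ℤ] (Fin (N+1) → ℤ) where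
  toFun x := Fin.cons 0 x
  map_add' a b := by
    funext i
    refine Fin.cases ?_ (fun i' => ?_) i <;> simp
  map_smul' c a := by
    funext i
    refine Fin.cases ?_ (fun i' => ?_) i <;> simp

/-- `ℤ^{N+1} → ℤ^N`, deleting the first coordinate. -/
def tailL {N : ℕ} : (Fin (N+1) → ℤ) →ₗ[ℤ] (Fin N → ℤ) :=
  LinearMap.funLeft ℤ ℤ Fin.succ

lemma sA_e1 {N : ℕ} [NeZero N] : sA N (e1 N) = 1 := by
  simp [sA_apply, e1, Pi.single_apply]

lemma R1_mulVec {N : ℕ} [NeZero N] (x : Fin N → ℤ) :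
    (R1 N).mulVec x = (sA N x) • e1 N := by
  funext i
  by_cases h : i = 0 <;>
    simp [R1, e1, Matrix.mulVec, dotProduct, sA_apply, Pi.single_apply, h]

lemma jA_eq' {N : ℕ} [NeZero N] (x : Fin N → ℤ) :
    jA N x = x - (sA N x) • e1 N := by
  funext i
  by_cases h : i = 0
  · subst h
    simp only [jA, LinearMap.coe_mk, AddHom.coe_mk, reduceIte, Pi.sub_apply, Pi.smul_apply,
      smul_eq_mul, sA_apply, e1, Pi.single_eq_same, mul_one]
    rw [← Finset.add_sum_erase _ x (Finset.mem_univ 0)]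
    ring
  · simp [jA, e1, Pi.single_apply, h]

lemma jA_eq_mulVec {N : ℕ} [NeZero N] (x : Fin N → ℤ) :
    jA N x = (1 - R1 N).mulVec x := by
  rw [jA_eq', Matrix.sub_mulVec, Matrix.one_mulVec, R1_mulVec]

lemma one_sub_Ahat {N : ℕ} [NeZero N] (A : Matrix (Fin N) (Fin N) ℤ) :
    1 - Ahat A = (1 - A) * (1 - R1 N) := by
  unfold Ahat
  noncomm_ring

lemma colSpan_Ahat_le {N : ℕ} [NeZero N] (A : Matrix (Fin N) (Fin N) ℤ) :
    colSpan (1 - Ahat A) ≤ colSpan (1 - A) := by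
  rintro _ ⟨x, rfl⟩
  refine ⟨(1 - R1 N).mulVec x, ?_⟩
  rw [mulVecLin_apply, mulVecLin_apply, one_sub_Ahat, ← Matrix.mulVec_mulVec]

/-- `q̂_A : ℤ^N/(I-Â)ℤ^N → ℤ^N/(I-A)ℤ^N`, induced by the identity map of `ℤ^N`. -/
def qHat {N : ℕ} [NeZero N] (A : Matrix (Fin N) (Fin N) ℤ) :
    MQuot (1 - Ahat A) →ₗ[ℤ] MQuot (1 - A) :=
  Submodule.liftQ _ (colSpan (1 - A)).mkQ
    (by simpa [Submodule.ker_mkQ] using colSpan_Ahat_le A)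

/-- `ι̂_A : ℤ → ℤ^N/(I-Â)ℤ^N`, `m ↦ [(I-A)(m·e₁)]`. -/
def iotaHat {N : ℕ} [NeZero N] (A : Matrix (Fin N) (Fin N) ℤ) :
    ℤ →ₗ[ℤ] MQuot (1 - Ahat A) :=
  (colSpan (1 - Ahat A)).mkQ ∘ₗ (1 - A).mulVecLin ∘ₗ i1 N

lemma e1_mem_kerHat {N : ℕ} [NeZero N] (A : Matrix (Fin N) (Fin N) ℤ) :
    e1 N ∈ LinearMap.ker (1 - Ahat A).mulVecLin := by
  rw [LinearMap.mem_ker, mulVecLin_apply, one_sub_Ahat, ← Matrix.mulVec_mulVec]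
  have : (1 - R1 N).mulVec (e1 N) = 0 := by
    rw [Matrix.sub_mulVec, Matrix.one_mulVec, R1_mulVec, sA_e1, one_smul, sub_self]
  rw [this, Matrix.mulVec_zero]

lemma jA_mem_ker {N : ℕ} [NeZero N] (A : Matrix (Fin N) (Fin N) ℤ) (x : Fin N → ℤ)
    (hx : x ∈ LinearMap.ker (1 - Ahat A).mulVecLin) :
    jA N x ∈ LinearMap.ker (1 - A).mulVecLin := by
  rw [LinearMap.mem_ker, mulVecLin_apply] at *
  rw [jA_eq_mulVec, Matrix.mulVec_mulVec, ← one_sub_Ahat]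
  exact hx

lemma sA_jA {N : ℕ} [NeZero N] (x : Fin N → ℤ) : sA N (jA N x) = 0 := by
  rw [jA_eq', map_sub, LinearMap.map_smul, sA_e1, smul_eq_mul, mul_one, sub_self]

lemma jA_e1 {N : ℕ} [NeZero N] : jA N (e1 N) = 0 := by
  rw [jA_eq', sA_e1, one_smul, sub_self]

lemma tailL_key {N : ℕ} (A : Matrix (Fin N) (Fin N) ℤ) (x : Fin (N+1) → ℤ) :
    tailL ((1 - A1 A).mulVec x) = (1 - A).mulVec (tailL x) := by
  funext i
  simp only [tailL, LinearMap.funLeft_apply, Function.comp, Matrix.mulVec, dotProduct,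
    Matrix.sub_apply, Matrix.one_apply, A1, Matrix.of_apply, Fin.cases_succ,
    sub_mul, Finset.sum_sub_distrib]
  congr 1
  · rw [Fin.sum_univ_succ]
    simp [Fin.succ_ne_zero, Fin.succ_inj]
  · rw [Fin.sum_univ_succ]
    simp

/-- `ι_{A₁} : ℤ → ℤ^{N+1}/(I-A₁)ℤ^{N+1}`, `m ↦ [(0, (I-A)(m·e₁))]`. -/
def iotaA1 {N : ℕ} [NeZero N] (A : Matrix (Fin N) (Fin N) ℤ) :
    ℤ →ₗ[ℤ] MQuot (1 - A1 A) :=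
  (colSpan (1 - A1 A)).mkQ ∘ₗ ext0 ∘ₗ (1 - A).mulVecLin ∘ₗ i1 N

/-- `q_{A₁} : ℤ^{N+1}/(I-A₁)ℤ^{N+1} → ℤ^N/(I-A)ℤ^N`, induced by deleting the
first coordinate. -/
def qA1 {N : ℕ} (A : Matrix (Fin N) (Fin N) ℤ) :
    MQuot (1 - A1 A) →ₗ[ℤ] MQuot (1 - A) :=
  Submodule.liftQ _ ((colSpan (1 - A)).mkQ ∘ₗ tailL) (by
    rintro _ ⟨x, rfl⟩
    simp only [LinearMap.mem_ker, LinearMap.comp_apply, mulVecLin_apply]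
    rw [tailL_key]
    exact (Submodule.Quotient.mk_eq_zero _).2 ⟨tailL x, rfl⟩)


/-!
Since the first row of `A₁` is `(1, …, 1)` and its first column is `(1, 0, …, 0)ᵗ`, we have
`(I - A₁)(x₀, y) = (-∑ yᵢ, (I - A) y)`. If `I - A` is invertible over `ℤ` and `u (I - A) = (1, …, 1)`,
these are exactly the vectors killed by `(x₀, y) ↦ x₀ + u · y`, which therefore identifies the
quotient with `ℤ`. For `B₋`, `I - B₋` is minus the adjacency matrix of the path on four vertices,
which is unimodular, and `u = (1, …, 1)(I - B₋)⁻¹ = (0, -1, -1, 0)`.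
-/

lemma one_sub_A1_mulVec {N : ℕ} (A : Matrix (Fin N) (Fin N) ℤ) (x : Fin (N + 1) → ℤ) :
    (1 - A1 A) *ᵥ x = Fin.cons (-∑ i, Fin.tail x i) ((1 - A) *ᵥ Fin.tail x) := by
  funext i
  refine Fin.cases ?_ (fun i' => ?_) i
  · simp [A1, mulVec, dotProduct, Fin.sum_univ_succ, Fin.tail, one_apply, (Fin.succ_ne_zero _).symm]
  · simp [A1, mulVec, dotProduct, Fin.sum_univ_succ, Fin.tail, one_apply, sub_mul]

def A1QuotFunctional {N : ℕ} (u : Fin N → ℤ) : (Fin (N + 1) → ℤ) →ₗ[ℤ] ℤ where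
  toFun x := x 0 + u ⬝ᵥ Fin.tail x
  map_add' x y := by
    change x 0 + y 0 + u ⬝ᵥ (Fin.tail x + Fin.tail y) = _
    rw [dotProduct_add]
    ring
  map_smul' c x := by
    change c * x 0 + u ⬝ᵥ (c • Fin.tail x) = c * (x 0 + u ⬝ᵥ Fin.tail x)
    rw [dotProduct_smul, smul_eq_mul]
    ring

lemma A1QuotFunctional_apply {N : ℕ} (u : Fin N → ℤ) (x : Fin (N + 1) → ℤ) :
    A1QuotFunctional u x = x 0 + u ⬝ᵥ Fin.tail x :=
  rfl

lemma A1QuotFunctional_surjective {N : ℕ} (u : Fin N → ℤ) :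
    Function.Surjective (A1QuotFunctional u) :=
  fun m => ⟨Fin.cons m 0, by simp [A1QuotFunctional_apply]⟩

section

variable {N : ℕ} {A : Matrix (Fin N) (Fin N) ℤ} {u : Fin N → ℤ}

lemma range_one_sub_A1_eq_ker (hA : IsUnit (1 - A)) (hu : u ᵥ* (1 - A) = 1) :
    colSpan (1 - A1 A) = LinearMap.ker (A1QuotFunctional u) := by
  ext x
  constructor
  · rintro ⟨y, rfl⟩
    rw [LinearMap.mem_ker, mulVecLin_apply, one_sub_A1_mulVec, A1QuotFunctional_apply,
      Fin.cons_zero, Fin.tail_cons, dotProduct_mulVec, hu, one_dotProduct, neg_add_cancel]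
  · intro hx
    obtain ⟨y, hy⟩ := mulVec_surjective_iff_isUnit.2 hA (Fin.tail x)
    have hsum : ∑ i, y i = -x 0 := by
      rw [LinearMap.mem_ker, A1QuotFunctional_apply] at hx
      rw [← one_dotProduct, ← hu, ← dotProduct_mulVec, hy]
      linarith
    refine ⟨Fin.cons 0 y, ?_⟩
    calc (1 - A1 A) *ᵥ Fin.cons 0 y = Fin.cons (-∑ i, y i) ((1 - A) *ᵥ y) := by
          simpa using one_sub_A1_mulVec A (Fin.cons 0 y)
      _ = Fin.cons (x 0) (Fin.tail x) := by rw [hsum, neg_neg, hy]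
      _ = x := Fin.cons_self_tail x

def A1QuotEquiv (hA : IsUnit (1 - A)) (hu : u ᵥ* (1 - A) = 1) : MQuot (1 - A1 A) ≃ₗ[ℤ] ℤ :=
  (Submodule.quotEquivOfEq _ _ (range_one_sub_A1_eq_ker hA hu)).trans
    ((A1QuotFunctional u).quotKerEquivOfSurjective (A1QuotFunctional_surjective u))

lemma A1QuotEquiv_mk (hA : IsUnit (1 - A)) (hu : u ᵥ* (1 - A) = 1) (x : Fin (N + 1) → ℤ) :
    A1QuotEquiv hA hu (Submodule.Quotient.mk x) = x 0 + u ⬝ᵥ Fin.tail x :=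
  rfl

end

/-- For `B₋ = [[1,1,0,0],[1,1,1,0],[0,1,1,1],[0,0,1,1]]`, the group `ℤ⁵/(I-(B₋)₁)ℤ⁵`
is isomorphic to `ℤ` via an isomorphism sending `[(1,0,0,0,0)]` to `1` and
`[(1,1,1,1,1)]` to `-1`. -/
theorem stmt11 :
    ∃ φ : MQuot (1 - A1 !![1, 1, 0, 0; 1, 1, 1, 0; 0, 1, 1, 1; 0, 0, 1, (1 : ℤ)]) ≃+ ℤ,
      φ (Submodule.Quotient.mk ![1, 0, 0, 0, 0]) = 1 ∧
      φ (Submodule.Quotient.mk ![1, 1, 1, 1, 1]) = -1 := by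
  have hB : IsUnit (1 - !![1, 1, 0, 0; 1, 1, 1, 0; 0, 1, 1, 1; 0, 0, 1, (1 : ℤ)]) :=
    (isUnit_iff_isUnit_det _).2 <| isUnit_det_of_right_inverse
      (B := !![0, -1, 0, 1; -1, 0, 0, 0; 0, 0, 0, -1; 1, 0, -1, 0]) (by decide)
  have hu : ![0, -1, -1, 0] ᵥ* (1 - !![1, 1, 0, 0; 1, 1, 1, 0; 0, 1, 1, 1; 0, 0, 1, (1 : ℤ)]) =
      1 := by
    decide
  refine ⟨(A1QuotEquiv hB hu).toAddEquiv, ?_, ?_⟩ <;>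
    simp [A1QuotEquiv_mk, Fin.tail, dotProduct, Fin.sum_univ_four]

end
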